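/- Let S = {v_1, ..., v_n} be a tight frame in ℝ^k that locally maximizes F(S) = ∑_{L ∈ C([n],k)} |det(v_{i_1}, ..., v_{i_k})| (the volume of the zonotope ∑[0, v_i]) among tight frames. Then the vectors of S are in general position: every k of them are linearly independent, i.e., det(v_{i_1}, ..., v_{i_k}) ≠ 0 for every k-element subset {i_1, ..., i_k} ⊆ [n]. -/

import Mathlib

/-!
If some `k` of the vectors are dependent, then (since the frame spans) there are `k` dependent
ones `v l, v i (i ∈ I)` with `(v i)_{i ∈ I}` independent. Moving `v l` to `v l + t • u` with
`u ∉ span (v '' I)` makes every `k × k` determinant affine in `t`, and the one on `insert l I`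
becomes `t * c` with `c ≠ 0`. So along this curve `F` is at least `F(S) + a t + |c| |t|`, which
has a corner at `t = 0`, while the bound `F(S) √(det ∑ wᵢ ⊗ wᵢ)` that it stays below is
differentiable and equals `F(S)` at `t = 0`. This forces `c = 0`.
-/

/-- Shephard's formula for the volume of the zonotope `∑ᵢ [0, vᵢ] ⊆ ℝ^k`. -/
noncomputable def zonVol {n k : ℕ} (v : Fin n → Fin k → ℝ) : ℝ :=
  ∑ L : {s : Finset (Fin n) // s.card = k},
    |Matrix.det (Matrix.of fun a b : Fin k => v (L.1.orderIsoOfFin L.2 b) a)|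

open Matrix Module Submodule Filter Topology Function

section ColDet

variable {ι K : Type*} [LinearOrder ι] {k : ℕ}

noncomputable def colDet [CommRing K] (w : ι → Fin k → K) (M : {s : Finset ι // s.card = k}) :
    K :=
  det (of fun a b => w (M.1.orderIsoOfFin M.2 b) a)

lemma colDet_eq_det_rows [CommRing K] (w : ι → Fin k → K) (M : {s : Finset ι // s.card = k}) :
    colDet w M = det (of fun b => w (M.1.orderIsoOfFin M.2 b)) :=
  (det_transpose _).symm

lemma colDet_ne_zero_iff [Field K] {w : ι → Fin k → K} {M : {s : Finset ι // s.card = k}} :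
    colDet w M ≠ 0 ↔ LinearIndepOn K w (M.1 : Set ι) := by
  rw [colDet_eq_det_rows, ← isUnit_iff_ne_zero, ← isUnit_iff_isUnit_det,
    ← linearIndependent_rows_iff_isUnit]
  exact linearIndependent_equiv (M.1.orderIsoOfFin M.2).toEquiv (f := fun x : M.1 => w x)

lemma colDet_update_of_notMem [CommRing K] [DecidableEq ι] (w : ι → Fin k → K)
    {M : {s : Finset ι // s.card = k}} {j : ι} (hj : j ∉ M.1) (x : Fin k → K) :
    colDet (update w j x) M = colDet w M := by
  simp only [colDet]
  congr with a b
  rw [update_of_ne (ne_of_mem_of_not_mem (M.1.orderIsoOfFin M.2 b).2 hj)]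

lemma colDet_update_add_smul [CommRing K] [DecidableEq ι] (w : ι → Fin k → K)
    {M : {s : Finset ι // s.card = k}} {j : ι} (hj : j ∈ M.1) (u : Fin k → K) (t : K) :
    colDet (update w j (w j + t • u)) M = colDet w M + t * colDet (update w j u) M := by
  set e := M.1.orderIsoOfFin M.2
  set i := e.symm ⟨j, hj⟩
  have hcomp : ∀ x, (fun b => update w j x (e b)) = update (fun b => w (e b)) i x := by
    intro x
    have := update_comp_eq_of_injective w (Subtype.val_injective.comp e.injective) i x
    rwa [show (Subtype.val ∘ e) i = j by simp [i]] at this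
  set A : Matrix (Fin k) (Fin k) K := of fun b => w (e b)
  have hrow : ∀ x, (of fun b => update w j x (e b)) = A.updateRow i x := by
    intro x; rw [hcomp]; rfl
  have hAi : A i = w j := show w (e i) = w j by simp [i]
  simp only [colDet_eq_det_rows]
  rw [hrow, hrow, det_updateRow_add, det_updateRow_smul, ← hAi, updateRow_eq_self]

end ColDet

lemma nonpos_of_mul_abs_le_of_hasDerivAt {f : ℝ → ℝ} {f' c : ℝ} (hf : HasDerivAt f f' 0)
    (hf0 : f 0 = 0) (hle : ∀ᶠ t in 𝓝 0, c * |t| ≤ f t) : c ≤ 0 := by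
  by_contra! hc
  have hmin_sub : IsLocalMin (fun t => f t - c * t) 0 := hle.mono fun t ht => by
    simp only [hf0, mul_zero, sub_zero]
    nlinarith [le_abs_self t]
  have hmin_add : IsLocalMin (fun t => f t + c * t) 0 := hle.mono fun t ht => by
    simp only [hf0, mul_zero, add_zero]
    nlinarith [neg_abs_le t]
  have h₁ := hmin_sub.hasDerivAt_eq_zero (hf.sub ((hasDerivAt_id 0).const_mul c))
  have h₂ := hmin_add.hasDerivAt_eq_zero (hf.add ((hasDerivAt_id 0).const_mul c))
  simp only [mul_one] at h₁ h₂
  linarith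

lemma sum_abs_add_mul_ge {ι : Type*} [Fintype ι] (p d : ι → ℝ) {i₀ : ι} (hi₀ : p i₀ = 0)
    (t : ℝ) :
    ∑ i, |p i| + t * ∑ i, SignType.sign (p i) * d i + |t| * |d i₀| ≤ ∑ i, |p i + t * d i| := by
  classical
  have hterm : ∀ i, |p i| + t * (SignType.sign (p i) * d i) ≤ |p i + t * d i| := fun i =>
    calc |p i| + t * (SignType.sign (p i) * d i) = SignType.sign (p i) * (p i + t * d i) := by
          rw [← sign_mul_self]; ring
      _ ≤ |p i + t * d i| := by
          rcases SignType.sign (p i) with _ | _ | _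
          · simp
          · simpa using neg_le_abs (p i + t * d i)
          · simpa using le_abs_self (p i + t * d i)
  rw [Finset.mul_sum, ← Finset.sum_add_distrib, ← Finset.add_sum_erase _ _ (Finset.mem_univ i₀),
    ← Finset.add_sum_erase _ _ (Finset.mem_univ i₀)]
  have hi₀' :
      |p i₀| + t * (SignType.sign (p i₀) * d i₀) + |t| * |d i₀| = |p i₀ + t * d i₀| := by
    simp [hi₀, abs_mul]
  linarith [Finset.sum_le_sum fun i (_ : i ∈ Finset.univ.erase i₀) => hterm i]

lemma eq_zero_of_sum_abs_add_mul_le {ι : Type*} [Fintype ι] {p d : ι → ℝ} {h : ℝ → ℝ}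
    {h' : ℝ} (hh : HasDerivAt h h' 0) (hh0 : h 0 = ∑ i, |p i|)
    (hle : ∀ᶠ t in 𝓝 0, ∑ i, |p i + t * d i| ≤ h t) {i₀ : ι} (hi₀ : p i₀ = 0) : d i₀ = 0 := by
  set D := ∑ i, SignType.sign (p i) * d i
  have hderiv : HasDerivAt (fun t => h t - ∑ i, |p i| - t * D) (h' - D) 0 :=
    (hh.sub_const _).sub (hasDerivAt_mul_const D)
  refine abs_nonpos_iff.1 (nonpos_of_mul_abs_le_of_hasDerivAt hderiv (by simp [hh0]) ?_)
  filter_upwards [hle] with t ht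
  linarith [sum_abs_add_mul_ge p d hi₀ t, mul_comm |t| |d i₀|]

theorem Differentiable.matrix_det {𝕜 E n : Type*} [NontriviallyNormedField 𝕜]
    [NormedAddCommGroup E] [NormedSpace 𝕜 E] [Fintype n] [DecidableEq n] {A : E → Matrix n n 𝕜}
    (hA : ∀ i j, Differentiable 𝕜 fun x => A x i j) : Differentiable 𝕜 fun x => (A x).det := by
  simp only [det_apply']
  fun_prop

lemma sum_vecMulVec_self_eq_transpose_mul {ι m K : Type*} [Fintype ι] [CommSemiring K]
    (w : ι → m → K) : ∑ i, vecMulVec (w i) (w i) = (of w)ᵀ * of w := by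
  ext a b
  simp [Matrix.sum_apply, vecMulVec_apply, mul_apply]

lemma span_range_eq_top_of_det_sum_vecMulVec_ne_zero {ι m K : Type*} [Fintype ι] [Fintype m]
    [DecidableEq m] [Field K] [LinearOrder K] [IsStrictOrderedRing K] {w : ι → m → K}
    (h : det (∑ i, vecMulVec (w i) (w i)) ≠ 0) : span K (Set.range w) = ⊤ := by
  rw [sum_vecMulVec_self_eq_transpose_mul] at h
  have hrank := rank_of_isUnit _ ((isUnit_iff_isUnit_det _).2 (isUnit_iff_ne_zero.2 h))
  rw [rank_transpose_mul_self, rank_eq_finrank_span_row] at hrank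
  exact eq_top_of_finrank_eq (by rw [finrank_fintype_fun_eq_card]; exact hrank)

lemma exists_linearIndepOn_card_add_one_eq_finrank_mem_span {ι K V : Type*} [Finite ι]
    [DecidableEq ι] [Field K] [AddCommGroup V] [Module K V] [FiniteDimensional K V] {v : ι → V}
    (hv : span K (Set.range v) = ⊤) {L : Finset ι} (hL : L.card = finrank K V)
    (hdep : ¬ LinearIndepOn K v (L : Set ι)) :
    ∃ I : Finset ι, ∃ l ∉ I, I.card + 1 = finrank K V ∧ LinearIndepOn K v (I : Set ι) ∧
      v l ∈ span K (v '' I) := by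
  classical
  obtain ⟨I₀, hI₀L, -, hLI₀, hI₀⟩ :=
    exists_linearIndepOn_extension (linearIndepOn_empty K v) (Set.empty_subset (L : Set ι))
  lift I₀ to Finset ι using L.finite_toSet.subset hI₀L
  obtain ⟨J₀, -, hIJ₀, hJ₀span, hJ₀⟩ := exists_linearIndepOn_extension hI₀ (Set.subset_univ _)
  lift J₀ to Finset ι using Set.toFinite J₀
  have hIL : I₀ ⊂ L := Finset.ssubset_iff_subset_ne.2
    ⟨Finset.coe_subset.1 hI₀L, by rintro rfl; exact hdep hI₀⟩
  have hJ₀card : finrank K V ≤ J₀.card := by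
    have htop : span K (v '' J₀) = ⊤ :=
      eq_top_iff.2 (by rw [← hv, ← Set.image_univ]; exact span_le.2 hJ₀span)
    calc finrank K V = finrank K (span K (v '' J₀)) := by rw [htop, finrank_top]
      _ ≤ (J₀.image v).card := by rw [← Finset.coe_image]; exact finrank_span_finset_le_card _
      _ ≤ J₀.card := Finset.card_image_le
  obtain ⟨I, hI₀I, hIJ₀, hIcard⟩ := Finset.exists_subsuperset_card_eq (n := finrank K V - 1)
    (Finset.coe_subset.1 hIJ₀) (by have := Finset.card_lt_card hIL; omega) (by omega)
  obtain ⟨l, hlL, hlI₀⟩ := Finset.exists_of_ssubset hIL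
  have hlspan₀ : v l ∈ span K (v '' I₀) := hLI₀ (Set.mem_image_of_mem v hlL)
  have hI := hJ₀.mono (Finset.coe_subset.2 hIJ₀)
  refine ⟨I, l, fun hlI => ?_, by have := Finset.card_lt_card hIL; omega, hI,
    span_mono (Set.image_mono (Finset.coe_subset.2 hI₀I)) hlspan₀⟩
  exact hI.notMem_span hlI (span_mono (Set.image_mono
    (Set.subset_sdiff_singleton (Finset.coe_subset.2 hI₀I) hlI₀)) hlspan₀)

lemma exists_notMem_span_image_of_card_lt {ι K V : Type*} [Field K] [AddCommGroup V]
    [Module K V] [FiniteDimensional K V] (v : ι → V) {I : Finset ι} (hI : I.card < finrank K V) :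
    ∃ u, u ∉ span K (v '' I) := by
  classical
  by_contra! h
  have htop : span K (v '' I) = ⊤ := eq_top_iff'.2 h
  have := finrank_span_finset_le_card (R := K) (I.image v)
  rw [Finset.coe_image, Set.finrank, htop, finrank_top] at this
  exact absurd (this.trans Finset.card_image_le) (not_le.2 hI)

section TightFrame

variable {n k : ℕ}

def IsLocalMaxZonVol (v : Fin n → Fin k → ℝ) : Prop :=
  ∃ U ∈ 𝓝 v, ∀ w ∈ U, span ℝ (Set.range w) = ⊤ →
    zonVol w ≤ zonVol v * √(det (∑ i, vecMulVec (w i) (w i)))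

theorem IsLocalMaxZonVol.colDet_update_eq_zero {v : Fin n → Fin k → ℝ}
    (hmax : IsLocalMaxZonVol v) (hv : ∑ i, vecMulVec (v i) (v i) = 1)
    {M : {s : Finset (Fin n) // s.card = k}} (hM : colDet v M = 0) {j : Fin n} (hj : j ∈ M.1)
    (u : Fin k → ℝ) : colDet (update v j u) M = 0 := by
  obtain ⟨U, hU, hUmax⟩ := hmax
  set w : ℝ → Fin n → Fin k → ℝ := fun t => update v j (v j + t • u)
  set d : {s : Finset (Fin n) // s.card = k} → ℝ :=
    fun N => if j ∈ N.1 then colDet (update v j u) N else 0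
  have hw : ∀ t N, colDet (w t) N = colDet v N + t * d N := by
    intro t N
    by_cases hjN : j ∈ N.1
    · simp only [w, d, if_pos hjN, colDet_update_add_smul v hjN]
    · simp only [w, d, if_neg hjN, colDet_update_of_notMem v hjN, mul_zero, add_zero]
  set φ : ℝ → ℝ := fun t => det (∑ i, vecMulVec (w t i) (w t i))
  have hwd : ∀ i a, Differentiable ℝ fun t => w t i a := by
    intro i a
    by_cases hi : i = j
    · subst hi; simp only [w, update_self]; fun_prop
    · simp only [w, update_of_ne hi]; fun_prop
  have hφ : Differentiable ℝ φ := Differentiable.matrix_det fun a b => by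
    simp only [Matrix.sum_apply, vecMulVec_apply]
    fun_prop
  have hφ0 : φ 0 = 1 := by simp [φ, w, hv]
  have hw0 : Tendsto w (𝓝 0) (𝓝 v) := by
    simpa [w] using (show Continuous w by fun_prop).tendsto 0
  have hle : ∀ᶠ t in 𝓝 0, ∑ N, |colDet v N + t * d N| ≤ zonVol v * √(φ t) := by
    filter_upwards [hw0.eventually_mem hU,
      hφ.continuous.continuousAt.eventually_ne (by rw [hφ0]; exact one_ne_zero)] with t htU htφ
    simp only [← hw]
    exact hUmax _ htU (span_range_eq_top_of_det_sum_vecMulVec_ne_zero htφ)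
  have hderiv := ((hφ 0).hasDerivAt.sqrt (by rw [hφ0]; exact one_ne_zero)).const_mul (zonVol v)
  have := eq_zero_of_sum_abs_add_mul_le hderiv (by simp [hφ0]; rfl) hle hM
  simpa [d, hj] using this

end TightFrame

/-- Corollary `cor:lin_ind`: let `S = (v 1, ..., v n)` be a tight
frame in `ℝ^k` which locally maximizes the zonotope volume
`F(S) = ∑_{L} |det (v_{i₁}, ..., v_{i_k})|` among tight frames, in the sense
that `F(S') ≤ F(S) · √(det ∑ v'ᵢ ⊗ v'ᵢ)` for all frames `S'` in some
neighborhood of `S`. Then the vectors of `S` are in general position: every `k`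
of them are linearly independent, i.e. `det (v_{i₁}, ..., v_{i_k}) ≠ 0` for
every `k`-element subset. -/
theorem stmt_18 (n k : ℕ) (v : Fin n → Fin k → ℝ)
    (hv : ∑ i, Matrix.vecMulVec (v i) (v i) = (1 : Matrix (Fin k) (Fin k) ℝ))
    (hmax : ∃ U ∈ nhds v, ∀ w ∈ U, Submodule.span ℝ (Set.range w) = ⊤ →
      zonVol w ≤ zonVol v * Real.sqrt (Matrix.det (∑ i, Matrix.vecMulVec (w i) (w i))))
    (L : Finset (Fin n)) (hL : L.card = k) :
    Matrix.det (Matrix.of fun a b : Fin k => v (L.orderIsoOfFin hL b) a) ≠ 0 := by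
  change colDet v ⟨L, hL⟩ ≠ 0
  intro hdet
  have hspan := span_range_eq_top_of_det_sum_vecMulVec_ne_zero (w := v) (by simp [hv])
  obtain ⟨I, l, hlI, hIcard, hI, hlspan⟩ :=
    exists_linearIndepOn_card_add_one_eq_finrank_mem_span hspan (by simpa using hL)
      (fun h => colDet_ne_zero_iff.2 h hdet)
  obtain ⟨u, hu⟩ := exists_notMem_span_image_of_card_lt v (K := ℝ) (I := I) (by omega)
  rw [finrank_fin_fun] at hIcard
  let T : {s : Finset (Fin n) // s.card = k} :=
    ⟨insert l I, by rw [Finset.card_insert_of_notMem hlI, hIcard]⟩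
  have hT : colDet v T = 0 := by
    rw [← not_ne_iff, colDet_ne_zero_iff, Finset.coe_insert, linearIndepOn_insert hlI]
    exact fun h => h.2 hlspan
  refine colDet_ne_zero_iff.2 ?_ (IsLocalMaxZonVol.colDet_update_eq_zero hmax hv hT
    (Finset.mem_insert_self l I) u)
  have hEq : Set.EqOn (update v l u) v I := fun i hi =>
    update_of_ne (ne_of_mem_of_not_mem hi hlI) _ _
  rw [Finset.coe_insert, linearIndepOn_insert hlI, update_self, linearIndepOn_congr hEq,
    hEq.image_eq]
  exact ⟨hI, hu⟩
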